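/- For π = 1/2, the attenuation function γ(β₁ᵍ, 1/2, c, β₀ᵍ) is monotonically nondecreasing in β₁ᵍ; equivalently, the asymptotic relative bias b = 1 − γ is monotonically nonincreasing in β₁ᵍ. -/
import Mathlib

open MeasureTheory ProbabilityTheory Filter

/-- Standard normal CDF. -/
noncomputable def Phi (x : ℝ) : ℝ := ((gaussianReal 0 1) (Set.Iic x)).toReal

/-- Attenuation function `γ(β₁ᵍ, π, c, β₀ᵍ) = π(ω − E)/(E(1 − E))` with
`E = ζ(1−π) + ωπ`, `ω = Φ(β₁ᵍ + β₀ᵍ − c)`, `ζ = Φ(β₀ᵍ − c)`. -/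
noncomputable def gammaFn (b1 p c b0 : ℝ) : ℝ :=
  p * (Phi (b1 + b0 - c) - (Phi (b0 - c) * (1 - p) + Phi (b1 + b0 - c) * p)) /
    ((Phi (b0 - c) * (1 - p) + Phi (b1 + b0 - c) * p) *
      (1 - (Phi (b0 - c) * (1 - p) + Phi (b1 + b0 - c) * p)))

lemma Phi_pos (x : ℝ) : 0 < Phi x := by
  rw [Phi]
  have h1 : (gaussianReal 0 1) (Set.Iic x) ≠ 0 := by
    intro h
    have := (gaussianReal_absolutelyContinuous' 0 (by norm_num)) h
    simp [Real.volume_Iic] at this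
  exact ENNReal.toReal_pos h1 (measure_ne_top _ _)

lemma Phi_lt_one (x : ℝ) : Phi x < 1 := by
  rw [Phi]
  have h1 : (gaussianReal 0 1) (Set.Ioi x) ≠ 0 := by
    intro h
    have := (gaussianReal_absolutelyContinuous' 0 (by norm_num)) h
    simp [Real.volume_Ioi] at this
  have hsum : (gaussianReal 0 1) (Set.Iic x) + (gaussianReal 0 1) (Set.Ioi x) = 1 := by
    rw [← measure_union (Set.Iic_disjoint_Ioi le_rfl) measurableSet_Ioi,
      Set.Iic_union_Ioi, measure_univ]
  have hlt : (gaussianReal 0 1) (Set.Iic x) < 1 := by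
    rw [← hsum]
    exact ENNReal.lt_add_right (measure_ne_top _ _) h1
  have := (ENNReal.toReal_lt_toReal (measure_ne_top _ _)
    (by norm_num : (1:ENNReal) ≠ ⊤)).mpr hlt
  simpa using this

lemma Phi_mono : Monotone Phi := fun a b hab => by
  rw [Phi, Phi]
  exact ENNReal.toReal_mono (measure_ne_top _ _) (measure_mono (Set.Iic_subset_Iic.mpr hab))

/-- Core algebraic monotonicity. -/
lemma core_ineq {z u v : ℝ} (hz0 : 0 < z) (hz1 : z < 1) (hu0 : 0 < u) (hv1 : v < 1)
    (huv : u ≤ v) :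
    (u - z) / ((z + u) * (2 - z - u)) ≤ (v - z) / ((z + v) * (2 - z - v)) := by
  have hu1 : u < 1 := lt_of_le_of_lt huv hv1
  have hv0 : 0 < v := lt_of_lt_of_le hu0 huv
  have hd1 : 0 < (z + u) * (2 - z - u) := by nlinarith
  have hd2 : 0 < (z + v) * (2 - z - v) := by nlinarith
  rw [div_le_div_iff₀ hd1 hd2]
  have key : (0:ℝ) ≤ (u - z) * (v - z) + 4 * z * (1 - z) := by
    rcases le_or_gt z u with h | h
    · nlinarith [mul_nonneg (sub_nonneg.mpr h) (sub_nonneg.mpr (h.trans huv)),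
        mul_pos hz0 (sub_pos.mpr hz1)]
    · rcases le_or_gt v z with h2 | h2
      · nlinarith [mul_nonneg (sub_nonneg.mpr h2) (sub_nonneg.mpr (huv.trans h2)),
          mul_pos hz0 (sub_pos.mpr hz1)]
      · nlinarith [mul_pos hz0 (sub_pos.mpr hv1), mul_pos hu0 (sub_pos.mpr h2),
          mul_pos hz0 (sub_pos.mpr hz1)]
  nlinarith [mul_nonneg (sub_nonneg.mpr huv) key]

lemma gammaFn_half (b1 c b0 : ℝ) :
    gammaFn b1 (1/2) c b0 =
      (Phi (b1 + b0 - c) - Phi (b0 - c)) /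
        ((Phi (b0 - c) + Phi (b1 + b0 - c)) * (2 - Phi (b0 - c) - Phi (b1 + b0 - c))) := by
  rw [gammaFn]
  set z := Phi (b0 - c) with hz
  set u := Phi (b1 + b0 - c) with hu
  have hz0 := Phi_pos (b0 - c); have hz1 := Phi_lt_one (b0 - c)
  have hu0 := Phi_pos (b1 + b0 - c); have hu1 := Phi_lt_one (b1 + b0 - c)
  rw [← hz, ← hu] at *
  have hd : (0:ℝ) < (z + u) * (2 - z - u) := by nlinarith
  have hd4 : ((z * (1 - 1/2) + u * (1/2)) * (1 - (z * (1 - 1/2) + u * (1/2)))) =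
      ((z + u) * (2 - z - u)) / 4 := by ring
  rw [hd4, div_eq_div_iff (by positivity) (ne_of_gt hd)]
  ring

/-- For π = 1/2 the attenuation function γ is monotonically nondecreasing in β₁ᵍ;
equivalently the asymptotic relative bias b = 1 − γ is nonincreasing in β₁ᵍ. -/
theorem stmt_2 (c b0 : ℝ) :
    Monotone (fun b1 => gammaFn b1 (1/2) c b0) ∧
      Antitone (fun b1 => 1 - gammaFn b1 (1/2) c b0) := by
  have hmono : Monotone (fun b1 => gammaFn b1 (1/2) c b0) := by
    intro a b hab
    simp only [gammaFn_half]
    exact core_ineq (Phi_pos (b0 - c)) (Phi_lt_one (b0 - c)) (Phi_pos (a + b0 - c))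
      (Phi_lt_one (b + b0 - c)) (Phi_mono (by linarith))
  exact ⟨hmono, fun a b hab => sub_le_sub_left (hmono hab) 1⟩
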